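/- Let φ : ℝ → ℝ be even, C⁴ on ℝ∖{0}, and satisfy assumptions (A1)–(A2) with α ∈ (0,2) and a₀ ≤ 1/2. Then the periodic influence function φ^S(x) := ∑_{k∈ℤ} φ(x+k) is well defined for x ∈ [−1/2,1/2]∖{0} and satisfies (1/(2c₁)) |x|^{−(1+α)} ≤ φ^S(x) ≤ 2c₁ |x|^{−(1+α)} for all 0 < |x| ≤ r₀, where r₀ := min{a₀, (6c₁c₂)^{−1/(1+α)}}. -/

import Mathlib

open Real MeasureTheory Filter Set Topology

noncomputable section

/-- Principal-value Lévy operator: (𝓛 f)(x) = p.v. ∫ φ(x-y)(f(x)-f(y)) dy. -/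
def levy (φ f : ℝ → ℝ) (x : ℝ) : ℝ :=
  limUnder (nhdsWithin (0:ℝ) (Set.Ioi 0))
    (fun ε => ∫ y in {y : ℝ | ε ≤ |x - y|}, φ (x - y) * (f x - f y))

/-- Principal-value alignment force. -/
def alignForce (φ ρ u : ℝ → ℝ) (x : ℝ) : ℝ :=
  limUnder (nhdsWithin (0:ℝ) (Set.Ioi 0))
    (fun ε => ∫ y in {y : ℝ | ε ≤ |x - y|}, φ (x - y) * (u y - u x) * ρ y)

/-- Periodization -/
def phiS (φ : ℝ → ℝ) (x : ℝ) : ℝ := ∑' k : ℤ, φ (x + (k : ℝ))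

def supNorm (f : ℝ → ℝ) : ℝ := ⨆ x : ℝ, |f x|

structure A12 (φ : ℝ → ℝ) (α a₀ c₁ c₂ : ℝ) : Prop where
  αpos : 0 < α
  αlt : α < 2
  a₀pos : 0 < a₀
  a₀le : a₀ ≤ 1/2
  c₁ge : 1 ≤ c₁
  c₂pos : 0 < c₂
  even : ∀ x : ℝ, φ (-x) = φ x
  smooth : ContDiffOn ℝ 4 φ {(0:ℝ)}ᶜ
  lower : ∀ x : ℝ, x ≠ 0 → |x| ≤ a₀ → c₁⁻¹ * |x| ^ (-(1+α)) ≤ φ x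
  upper : ∀ x : ℝ, x ≠ 0 → |x| ≤ a₀ → φ x ≤ c₁ * |x| ^ (-(1+α))
  derivBound : ∀ j : ℕ, 1 ≤ j → j ≤ 4 → ∀ x : ℝ, x ≠ 0 → |x| ≤ a₀ →
    |iteratedDeriv j φ x| ≤ c₁ * |x| ^ (-(1+(j:ℝ)+α))
  mono : ∀ r s : ℝ, 0 < r → r ≤ s → s ≤ a₀ → φ s ≤ φ r
  tailInt : ∀ j : ℕ, j ≤ 4 →
    IntegrableOn (fun x : ℝ => |x| ^ (j:ℝ) * |iteratedDeriv j φ x|) {x : ℝ | a₀ ≤ |x|}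
  tailBound : ∀ j : ℕ, j ≤ 4 →
    (∫ x in {x : ℝ | a₀ ≤ |x|}, |x| ^ (j:ℝ) * |iteratedDeriv j φ x|) ≤ c₂

structure EASol (φ : ℝ → ℝ) (T : ℝ) (ρ u : ℝ → ℝ → ℝ) : Prop where
  smooth_rho : ContDiffOn ℝ (⊤ : ℕ∞) (Function.uncurry ρ) (Set.univ ×ˢ Set.Icc 0 T)
  smooth_u : ContDiffOn ℝ (⊤ : ℕ∞) (Function.uncurry u) (Set.univ ×ˢ Set.Icc 0 T)
  periodic_rho : ∀ x t, ρ (x + 1) t = ρ x t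
  periodic_u : ∀ x t, u (x + 1) t = u x t
  mass : ∀ x : ℝ, ∀ t ∈ Set.Icc 0 T,
    derivWithin (fun s => ρ x s) (Set.Icc 0 T) t + deriv (fun y => ρ y t * u y t) x = 0
  mom : ∀ x : ℝ, ∀ t ∈ Set.Icc 0 T,
    derivWithin (fun s => u x s) (Set.Icc 0 T) t + u x t * deriv (fun y => u y t) x
      = alignForce φ (fun y => ρ y t) (fun y => u y t) x

section AuxStmt1

variable {φ : ℝ → ℝ} {α a₀ c₁ c₂ : ℝ}

private lemma aux_Fint (h : A12 φ α a₀ c₁ c₂) :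
    IntegrableOn (fun y : ℝ => |φ y| + 2 * (|y| * |deriv φ y|)) {y : ℝ | a₀ ≤ |y|} ∧
    (∫ y in {y : ℝ | a₀ ≤ |y|}, (|φ y| + 2 * (|y| * |deriv φ y|))) ≤ 3 * c₂ := by
  have h0 := h.tailInt 0 (by norm_num)
  have h1 := h.tailInt 1 (by norm_num)
  have hb0 := h.tailBound 0 (by norm_num)
  have hb1 := h.tailBound 1 (by norm_num)
  have e0 : (fun x : ℝ => |x| ^ ((0:ℕ):ℝ) * |iteratedDeriv 0 φ x|) = fun x : ℝ => |φ x| := by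
    funext x; simp
  have e1 : (fun x : ℝ => |x| ^ ((1:ℕ):ℝ) * |iteratedDeriv 1 φ x|)
      = fun x : ℝ => |x| * |deriv φ x| := by
    funext x; simp [iteratedDeriv_one]
  rw [e0] at h0 hb0
  rw [e1] at h1 hb1
  refine ⟨h0.add (h1.const_mul 2), ?_⟩
  rw [integral_add h0 (h1.const_mul 2), integral_const_mul 2 _]
  linarith

private lemma aux_key (h : A12 φ α a₀ c₁ c₂) {a b c : ℝ} (hb : b = a + 1)
    (hc : c ∈ Set.Icc a b) (hsub : Set.Icc a b ⊆ {y : ℝ | 1/2 ≤ |y|}) :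
    |φ c| ≤ ∫ y in Set.Icc a b, (|φ y| + 2 * (|y| * |deriv φ y|)) := by
  have hne : Set.Icc a b ⊆ ({(0:ℝ)}ᶜ) := by
    intro y hy
    have h12 : (1:ℝ)/2 ≤ |y| := hsub hy
    simp only [Set.mem_compl_iff, Set.mem_singleton_iff]
    intro h0; rw [h0] at h12; simp at h12; linarith
  have hφc : ContinuousOn φ (Set.Icc a b) := h.smooth.continuousOn.mono hne
  have hφ'c : ContinuousOn (deriv φ) (Set.Icc a b) :=
    (h.smooth.continuousOn_deriv_of_isOpen isOpen_compl_singleton (by norm_num)).mono hne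
  have habs' : IntegrableOn (fun y => |deriv φ y|) (Set.Icc a b) :=
    hφ'c.abs.integrableOn_Icc
  have hstep : ∀ y ∈ Set.Icc a b, |φ c| ≤ |φ y| + ∫ t in Set.Icc a b, |deriv φ t| := by
    intro y hy
    have huIcc : Set.uIcc y c ⊆ Set.Icc a b := Set.uIcc_subset_Icc hy hc
    have hftc : ∫ t in y..c, deriv φ t = φ c - φ y := by
      apply intervalIntegral.integral_eq_sub_of_hasDerivAt
      · intro t ht
        have ht0 : t ∈ ({(0:ℝ)}ᶜ) := hne (huIcc ht)
        exact ((h.smooth.differentiableOn (by norm_num)).differentiableAt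
          (isOpen_compl_singleton.mem_nhds ht0)).hasDerivAt
      · exact (hφ'c.mono huIcc).intervalIntegrable
    have hbound : |φ c - φ y| ≤ ∫ t in Set.Icc a b, |deriv φ t| := by
      rw [← hftc]
      calc |∫ t in y..c, deriv φ t| ≤ ∫ t in Set.uIoc y c, |deriv φ t| := by
            simpa [Real.norm_eq_abs] using
              intervalIntegral.norm_integral_le_integral_norm_uIoc
                (f := deriv φ) (a := y) (b := c) (μ := volume)
        _ ≤ ∫ t in Set.Icc a b, |deriv φ t| := by
            apply setIntegral_mono_set habs'
              (Filter.Eventually.of_forall fun t => abs_nonneg _)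
            exact HasSubset.Subset.eventuallyLE (Set.uIoc_subset_uIcc.trans huIcc)
    calc |φ c| = |φ y + (φ c - φ y)| := by congr 1; ring
      _ ≤ |φ y| + |φ c - φ y| := abs_add_le _ _
      _ ≤ |φ y| + ∫ t in Set.Icc a b, |deriv φ t| := by linarith
  have hmeas1 : (volume (Set.Icc a b)).toReal = 1 := by
    rw [hb, Real.volume_Icc]
    norm_num
  have hconst : ∀ C : ℝ, IntegrableOn (fun _ : ℝ => C) (Set.Icc a b) := fun C =>
    integrableOn_const measure_Icc_lt_top.ne
  have h1 : |φ c| ≤ ∫ y in Set.Icc a b, (|φ y| + ∫ t in Set.Icc a b, |deriv φ t|) := by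
    have : |φ c| = ∫ _ in Set.Icc a b, |φ c| := by
      rw [setIntegral_const, measureReal_def, hmeas1, one_smul]
    rw [this]
    exact setIntegral_mono_on (hconst _) (hφc.abs.integrableOn_Icc.add (hconst _))
      measurableSet_Icc hstep
  have h2 : ∫ y in Set.Icc a b, (|φ y| + ∫ t in Set.Icc a b, |deriv φ t|)
      = (∫ y in Set.Icc a b, |φ y|) + ∫ t in Set.Icc a b, |deriv φ t| := by
    rw [integral_add hφc.abs.integrableOn_Icc (hconst _), setIntegral_const, measureReal_def, hmeas1, one_smul]
  have hcont2 : ContinuousOn (fun y : ℝ => 2 * (|y| * |deriv φ y|)) (Set.Icc a b) :=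
    continuousOn_const.mul ((continuous_abs.continuousOn).mul hφ'c.abs)
  have h3 : (∫ t in Set.Icc a b, |deriv φ t|) ≤ ∫ y in Set.Icc a b, 2 * (|y| * |deriv φ y|) := by
    apply setIntegral_mono_on habs' hcont2.integrableOn_Icc measurableSet_Icc
    intro y hy
    have h12 : (1:ℝ)/2 ≤ |y| := hsub hy
    nlinarith [abs_nonneg (deriv φ y)]
  have h4 : ∫ y in Set.Icc a b, (|φ y| + 2 * (|y| * |deriv φ y|))
      = (∫ y in Set.Icc a b, |φ y|) + ∫ y in Set.Icc a b, 2 * (|y| * |deriv φ y|) :=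
    integral_add hφc.abs.integrableOn_Icc hcont2.integrableOn_Icc
  rw [h4]; linarith

private lemma aux_tail (h : A12 φ α a₀ c₁ c₂) (x : ℝ) (hx : |x| ≤ 1/2) :
    Summable (fun k : ℤ => φ (x + (k : ℝ))) ∧
    |∑' k : ℤ, (if k = 0 then 0 else φ (x + (k : ℝ)))| ≤ 3 * c₂ := by
  obtain ⟨hFint, hFbd⟩ := aux_Fint h
  have hS : {y : ℝ | (1:ℝ)/2 ≤ |y|} ⊆ {y : ℝ | a₀ ≤ |y|} := fun y hy =>
    le_trans h.a₀le hy
  have hF0 : ∀ y : ℝ, 0 ≤ |φ y| + 2 * (|y| * |deriv φ y|) := fun y => by positivity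
  have hFS2 : IntegrableOn (fun y : ℝ => |φ y| + 2 * (|y| * |deriv φ y|))
      {y : ℝ | (1:ℝ)/2 ≤ |y|} := hFint.mono_set hS
  have hIcc : ∀ k : ℤ, k ≠ 0 →
      Set.Icc ((k:ℝ) - 1/2) ((k:ℝ) + 1/2) ⊆ {y : ℝ | (1:ℝ)/2 ≤ |y|} := by
    intro k hk y hy
    obtain ⟨hy1, hy2⟩ := hy
    simp only [Set.mem_setOf_eq]
    rcases lt_or_gt_of_ne hk with hneg | hpos
    · have hkle : (k:ℝ) ≤ -1 := by exact_mod_cast (by omega : k ≤ -1)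
      refine le_abs.mpr (Or.inr ?_); linarith
    · have hkge : (1:ℝ) ≤ (k:ℝ) := by exact_mod_cast (by omega : (1:ℤ) ≤ k)
      refine le_abs.mpr (Or.inl ?_); linarith
  set g : ℤ → ℝ := fun k => if k = 0 then 0 else
    ∫ y in Set.Ioc ((k:ℝ) - 1/2) ((k:ℝ) + 1/2), (|φ y| + 2 * (|y| * |deriv φ y|)) with hg
  have hgnn : ∀ k, 0 ≤ g k := by
    intro k
    by_cases hk : k = 0
    · simp [hg, hk]
    · simp only [hg, hk, if_false]
      exact setIntegral_nonneg measurableSet_Ioc fun y _ => hF0 y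
  have hgsum_le : ∀ T : Finset ℤ, ∑ k ∈ T, g k ≤ 3 * c₂ := by
    intro T
    rw [← Finset.sum_erase T (by simp [hg] : g 0 = 0)]
    have hints : ∀ k ∈ T.erase 0,
        IntegrableOn (fun y : ℝ => |φ y| + 2 * (|y| * |deriv φ y|))
          (Set.Ioc ((k:ℝ) - 1/2) ((k:ℝ) + 1/2)) := fun k hk =>
      hFS2.mono_set ((Set.Ioc_subset_Icc_self).trans (hIcc k (Finset.ne_of_mem_erase hk)))
    have hdisj : Set.Pairwise (↑(T.erase 0) : Set ℤ)
        (Function.onFun Disjoint fun k : ℤ => Set.Ioc ((k:ℝ) - 1/2) ((k:ℝ) + 1/2)) := by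
      intro j _ k _ hjk
      simp only [Function.onFun]
      rcases hjk.lt_or_gt with hlt | hlt
      · apply Set.Ioc_disjoint_Ioc.mpr
        have hr : (j:ℝ) + 1 ≤ (k:ℝ) := by exact_mod_cast (by omega : j + 1 ≤ k)
        exact le_trans (min_le_left _ _) (le_trans (by linarith) (le_max_right _ _))
      · apply Set.Ioc_disjoint_Ioc.mpr
        have hr : (k:ℝ) + 1 ≤ (j:ℝ) := by exact_mod_cast (by omega : k + 1 ≤ j)
        exact le_trans (min_le_right _ _) (le_trans (by linarith) (le_max_left _ _))
    have heq : ∑ k ∈ T.erase 0, g k = ∑ k ∈ T.erase 0,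
        ∫ y in Set.Ioc ((k:ℝ) - 1/2) ((k:ℝ) + 1/2), (|φ y| + 2 * (|y| * |deriv φ y|)) :=
      Finset.sum_congr rfl fun k hk => by simp [hg, Finset.ne_of_mem_erase hk]
    rw [heq, ← integral_biUnion_finset (T.erase 0) (fun k _ => measurableSet_Ioc) hdisj hints]
    have hsub : (⋃ k ∈ T.erase 0, Set.Ioc ((k:ℝ) - 1/2) ((k:ℝ) + 1/2))
        ⊆ {y : ℝ | a₀ ≤ |y|} := by
      intro y hy
      simp only [Set.mem_iUnion, exists_prop] at hy
      obtain ⟨k, hk, hy⟩ := hy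
      exact hS (hIcc k (Finset.ne_of_mem_erase hk) (Set.Ioc_subset_Icc_self hy))
    calc (∫ y in ⋃ k ∈ T.erase 0, Set.Ioc ((k:ℝ) - 1/2) ((k:ℝ) + 1/2),
            (|φ y| + 2 * (|y| * |deriv φ y|)))
        ≤ ∫ y in {y : ℝ | a₀ ≤ |y|}, (|φ y| + 2 * (|y| * |deriv φ y|)) :=
          setIntegral_mono_set hFint (Filter.Eventually.of_forall hF0)
            (HasSubset.Subset.eventuallyLE hsub)
      _ ≤ 3 * c₂ := hFbd
  have hgsummable : Summable g := summable_of_sum_le hgnn hgsum_le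
  have hgtsum : ∑' k, g k ≤ 3 * c₂ := Summable.tsum_le_of_sum_le hgsummable hgsum_le
  have hle : ∀ k : ℤ, |if k = 0 then 0 else φ (x + (k:ℝ))| ≤ g k := by
    intro k
    by_cases hk : k = 0
    · simp [hg, hk]
    · simp only [hg, hk, if_false]
      obtain ⟨hx1, hx2⟩ := abs_le.mp hx
      have hmem : x + (k:ℝ) ∈ Set.Icc ((k:ℝ) - 1/2) ((k:ℝ) + 1/2) :=
        ⟨by linarith, by linarith⟩
      have := aux_key h (by ring : (k:ℝ) + 1/2 = ((k:ℝ) - 1/2) + 1) hmem (hIcc k hk)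
      rwa [integral_Icc_eq_integral_Ioc] at this
  have hsum' : Summable (fun k : ℤ => if k = 0 then 0 else φ (x + (k:ℝ))) :=
    Summable.of_norm_bounded hgsummable fun k => by
      simpa [Real.norm_eq_abs] using hle k
  have habs_sum : Summable (fun k : ℤ => |if k = 0 then 0 else φ (x + (k:ℝ))|) := hsum'.abs
  constructor
  · have heq2 : (fun k : ℤ => φ (x + (k:ℝ)))
        = fun k : ℤ => (if k = 0 then 0 else φ (x + (k:ℝ)))
            + (if k = 0 then φ (x + (k:ℝ)) else 0) := by
      funext k; by_cases hk : k = 0 <;> simp [hk]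
    rw [heq2]
    exact hsum'.add (summable_of_ne_finset_zero (s := ({0} : Finset ℤ))
      (fun k hk => by simp only [Finset.mem_singleton] at hk; simp [hk]))
  · calc |∑' k : ℤ, (if k = 0 then 0 else φ (x + (k:ℝ)))|
        ≤ ∑' k : ℤ, |if k = 0 then 0 else φ (x + (k:ℝ))| := by
          simpa [Real.norm_eq_abs] using
            norm_tsum_le_tsum_norm (f := fun k : ℤ => if k = 0 then 0 else φ (x + (k:ℝ)))
              (by simpa [Real.norm_eq_abs] using habs_sum)
      _ ≤ ∑' k, g k := Summable.tsum_le_tsum hle habs_sum hgsummable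
      _ ≤ 3 * c₂ := hgtsum

end AuxStmt1

/-- Under (A1)–(A2) the periodized influence function
`φ^S(x) = ∑_{k∈ℤ} φ(x+k)` is well defined on `[-1/2,1/2] \ {0}` and satisfies the
short-range bounds `(2c₁)⁻¹ |x|^{-(1+α)} ≤ φ^S(x) ≤ 2c₁ |x|^{-(1+α)}` for
`0 < |x| ≤ r₀ := min{a₀, (6c₁c₂)^{-1/(1+α)}}`. -/
theorem stmt1 (φ : ℝ → ℝ) (α a₀ c₁ c₂ : ℝ) (h : A12 φ α a₀ c₁ c₂) :
    (∀ x : ℝ, x ≠ 0 → |x| ≤ 1/2 → Summable (fun k : ℤ => φ (x + (k : ℝ)))) ∧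
    (∀ x : ℝ, x ≠ 0 → |x| ≤ min a₀ ((6 * c₁ * c₂) ^ (-(1 + α)⁻¹)) →
      (1 / (2 * c₁)) * |x| ^ (-(1 + α)) ≤ phiS φ x ∧
      phiS φ x ≤ 2 * c₁ * |x| ^ (-(1 + α))) := by
  constructor
  · intro x _ hx
    exact (aux_tail h x hx).1
  · intro x hx0 hxr
    have hβ : (0:ℝ) < 1 + α := by linarith [h.αpos]
    have hc₁ : (0:ℝ) < c₁ := lt_of_lt_of_le one_pos h.c₁ge
    have hc₂ := h.c₂pos
    have hM : (0:ℝ) < 6 * c₁ * c₂ := by positivity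
    have hxa : |x| ≤ a₀ := le_trans hxr (min_le_left _ _)
    have hx2 : |x| ≤ 1/2 := le_trans hxa h.a₀le
    obtain ⟨hsum, htail⟩ := aux_tail h x hx2
    have hxpos : 0 < |x| := abs_pos.mpr hx0
    have hPpos : 0 < |x| ^ (-(1 + α)) := Real.rpow_pos_of_pos hxpos _
    have hMP : 6 * c₁ * c₂ ≤ |x| ^ (-(1 + α)) := by
      have hxM : |x| ≤ (6 * c₁ * c₂) ^ (-(1 + α)⁻¹) := le_trans hxr (min_le_right _ _)
      have h1 : |x| ^ (1 + α) ≤ ((6 * c₁ * c₂) ^ (-(1 + α)⁻¹)) ^ (1 + α) :=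
        Real.rpow_le_rpow (abs_nonneg x) hxM hβ.le
      have h2 : ((6 * c₁ * c₂) ^ (-(1 + α)⁻¹)) ^ (1 + α) = (6 * c₁ * c₂)⁻¹ := by
        rw [← Real.rpow_mul hM.le, neg_mul, inv_mul_cancel₀ hβ.ne', Real.rpow_neg_one]
      rw [h2] at h1
      have h4 : 0 < |x| ^ (1 + α) := Real.rpow_pos_of_pos hxpos _
      rw [Real.rpow_neg (abs_nonneg x)]
      calc 6 * c₁ * c₂ = ((6 * c₁ * c₂)⁻¹)⁻¹ := (inv_inv _).symm
        _ ≤ (|x| ^ (1 + α))⁻¹ := inv_anti₀ h4 h1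
    have h2c : (0:ℝ) < 2 * c₁ := by linarith
    have h3c : 3 * c₂ ≤ (2 * c₁)⁻¹ * |x| ^ (-(1 + α)) := by
      have hmul := mul_le_mul_of_nonneg_left hMP (le_of_lt (inv_pos.mpr h2c))
      calc 3 * c₂ = (2 * c₁)⁻¹ * (6 * c₁ * c₂) := by field_simp; ring
        _ ≤ (2 * c₁)⁻¹ * |x| ^ (-(1 + α)) := hmul
    have hphiS : phiS φ x = φ x + ∑' k : ℤ, (if k = 0 then 0 else φ (x + (k:ℝ))) := by
      have := Summable.tsum_eq_add_tsum_ite hsum 0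
      simpa [phiS] using this
    have hlow := h.lower x hx0 hxa
    have hup := h.upper x hx0 hxa
    obtain ⟨ht1, ht2⟩ := abs_le.mp htail
    have hkey : c₁⁻¹ * |x| ^ (-(1 + α)) = 2 * ((2 * c₁)⁻¹ * |x| ^ (-(1 + α))) := by
      field_simp
    have h1div : 1 / (2 * c₁) = (2 * c₁)⁻¹ := one_div _
    have hc1P : (2 * c₁)⁻¹ * |x| ^ (-(1 + α)) ≤ c₁ * |x| ^ (-(1 + α)) := by
      apply mul_le_mul_of_nonneg_right ?_ hPpos.le
      have hi1 : (2 * c₁)⁻¹ ≤ 1 := inv_le_one_of_one_le₀ (by linarith [h.c₁ge])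
      linarith [h.c₁ge]
    constructor
    · rw [hphiS, h1div]; linarith
    · rw [hphiS]; linarith
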